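/- Let N = ℤ², let σ ⊆ ℝ² be the cone spanned by the standard basis vectors e₁ and e₂, let Δ be the fan of faces of σ, and let L = ℤ·(a,b) with a, b relatively prime integers and a > 0. If b ≤ 0, then the quotient fan of Δ by L is the fan of faces of P^ℝ(σ) in Ñ := ℤ²/L, where P : ℤ² → ℤ²/L is the projection. If b > 0, then P^ℝ(σ) is not strictly convex and the quotient fan of Δ by L is the zero fan {{0}} in the zero lattice ℤ²/L̂ with L̂ = ℤ². -/

import Mathlib

open Set

/-- The coercion of an integral vector in `ℤ^n` to a real vector in `ℝ^n`. -/
def toR {n : ℕ} (v : Fin n → ℤ) : Fin n → ℝ := fun i => (v i : ℝ)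

/-- The scalar extension `F^ℝ : N^ℝ → N'^ℝ` of a `ℤ`-linear map `F : N → N'`,
where `N = ℤ^n`, `N' = ℤ^m`. -/
noncomputable def extR {n m : ℕ} (F : (Fin n → ℤ) →ₗ[ℤ] (Fin m → ℤ)) :
    (Fin n → ℝ) →ₗ[ℝ] (Fin m → ℝ) :=
  (Matrix.of fun i j => ((F (Pi.single j 1)) i : ℝ)).mulVecLin

/-- A convex cone: a subset containing `0` that is closed under addition and
under multiplication by nonnegative scalars. -/
def IsCone {V : Type*} [AddCommGroup V] [Module ℝ V] (σ : Set V) : Prop :=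
  0 ∈ σ ∧ (∀ x ∈ σ, ∀ y ∈ σ, x + y ∈ σ) ∧ ∀ c : ℝ, 0 ≤ c → ∀ x ∈ σ, c • x ∈ σ

/-- The convex-cone hull of a set: the smallest convex cone containing it. -/
def coneHull {V : Type*} [AddCommGroup V] [Module ℝ V] (s : Set V) : Set V :=
  ⋂₀ {σ | IsCone σ ∧ s ⊆ σ}

/-- A rational polyhedral cone in `ℝ^n`: a convex cone generated by finitely
many vectors of the lattice `ℤ^n`. -/
def IsRatCone {n : ℕ} (σ : Set (Fin n → ℝ)) : Prop :=
  ∃ s : Finset (Fin n → ℤ), σ = coneHull (toR '' ↑s)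

/-- A cone is strictly convex if it contains no nonzero linear subspace,
equivalently `σ ∩ (-σ) = {0}`. -/
def IsStrictlyConvexCone {V : Type*} [AddCommGroup V] [Module ℝ V] (σ : Set V) : Prop :=
  ∀ x ∈ σ, -x ∈ σ → x = 0

/-- `τ` is a face of the convex cone `σ`: a subcone such that whenever
`x, y ∈ σ` and `x + y ∈ τ`, then `x, y ∈ τ`. -/
def IsFaceOf {V : Type*} [AddCommGroup V] [Module ℝ V] (τ σ : Set V) : Prop :=
  IsCone τ ∧ τ ⊆ σ ∧ ∀ x ∈ σ, ∀ y ∈ σ, x + y ∈ τ → x ∈ τ ∧ y ∈ τ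

/-- A system of `N`-cones: a finite set of rational polyhedral cones in `ℝ^n`. -/
def IsConeSystem {n : ℕ} (S : Set (Set (Fin n → ℝ))) : Prop :=
  S.Finite ∧ ∀ σ ∈ S, IsRatCone σ

/-- A quasifan: a finite set of rational polyhedral cones, closed under taking
faces, in which any two cones intersect in a common face. -/
def IsQuasifan {n : ℕ} (Δ : Set (Set (Fin n → ℝ))) : Prop :=
  IsConeSystem Δ ∧ (∀ σ ∈ Δ, ∀ τ, IsFaceOf τ σ → τ ∈ Δ) ∧
    ∀ σ ∈ Δ, ∀ σ' ∈ Δ, IsFaceOf (σ ∩ σ') σ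

/-- A fan: a quasifan all of whose cones are strictly convex. -/
def IsFan {n : ℕ} (Δ : Set (Set (Fin n → ℝ))) : Prop :=
  IsQuasifan Δ ∧ ∀ σ ∈ Δ, IsStrictlyConvexCone σ

/-- `F` defines a map of systems of cones (in particular of (quasi-)fans):
every cone of `S` is mapped by `F^ℝ` into some cone of `S'`. -/
def IsConeMap {n m : ℕ} (F : (Fin n → ℤ) →ₗ[ℤ] (Fin m → ℤ))
    (S : Set (Set (Fin n → ℝ))) (S' : Set (Set (Fin m → ℝ))) : Prop :=
  ∀ σ ∈ S, ∃ τ ∈ S', extR F '' σ ⊆ τ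

/-- A sublattice `L ⊆ ℤ^n` is primitive if the quotient `ℤ^n/L` is
torsion-free. -/
def IsPrimitive {n : ℕ} (L : Submodule ℤ (Fin n → ℤ)) : Prop :=
  ∀ (v : Fin n → ℤ) (k : ℤ), k ≠ 0 → k • v ∈ L → v ∈ L

/-- The set of maximal cones of a system of cones. -/
def maxCones {n : ℕ} (Δ : Set (Set (Fin n → ℝ))) : Set (Set (Fin n → ℝ)) :=
  {σ ∈ Δ | ∀ τ ∈ Δ, σ ⊆ τ → σ = τ}

/-- `ρ` is a ray (one-dimensional cone) of `Δ`. -/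
def IsRay {n : ℕ} (Δ : Set (Set (Fin n → ℝ))) (ρ : Set (Fin n → ℝ)) : Prop :=
  ρ ∈ Δ ∧ Module.finrank ℝ (Submodule.span ℝ ρ) = 1

/-- `Δt`, together with the surjection `P : ℤ^n → ℤ^m` onto the quotient of
`ℤ^n` by the primitive sublattice `L̂ = ker P ⊇ L`, is the quotient fan of the
system of cones `S` by `L`: the projection `P` defines a map of systems of
cones from `S` to the fan `Δt` and every map of systems of cones `F` from `S`
to a fan with `F(L) = 0` factors through `P` via a map of fans. -/
def IsQuotientFan {n m : ℕ} (S : Set (Set (Fin n → ℝ))) (L : Submodule ℤ (Fin n → ℤ))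
    (P : (Fin n → ℤ) →ₗ[ℤ] (Fin m → ℤ)) (Δt : Set (Set (Fin m → ℝ))) : Prop :=
  Function.Surjective P ∧ L ≤ LinearMap.ker P ∧ IsPrimitive (LinearMap.ker P) ∧
  IsFan Δt ∧ IsConeMap P S Δt ∧
  ∀ (k : ℕ) (F : (Fin n → ℤ) →ₗ[ℤ] (Fin k → ℤ)) (Δ' : Set (Set (Fin k → ℝ))),
    IsFan Δ' → IsConeMap F S Δ' → L ≤ LinearMap.ker F →
    ∃ Ft : (Fin m → ℤ) →ₗ[ℤ] (Fin k → ℤ), IsConeMap Ft Δt Δ' ∧ F = Ft.comp P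

/-- The first-quadrant cone in `ℝ²`, spanned by the standard basis vectors. -/
noncomputable def quadrant : Set (Fin 2 → ℝ) :=
  coneHull (toR '' {![1, 0], ![0, 1]})

/-- The fan of `ℂ²`: all faces of the first-quadrant cone. -/
noncomputable def fanC2 : Set (Set (Fin 2 → ℝ)) :=
  {τ | IsFaceOf τ quadrant}

/-- The sublattice `L = ℤ·(a,b)` of `ℤ²`. -/
def lineLat (a b : ℤ) : Submodule ℤ (Fin 2 → ℤ) :=
  Submodule.span ℤ {![a, b]}

section Aux
variable {V W : Type*} [AddCommGroup V] [Module ℝ V] [AddCommGroup W] [Module ℝ W]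

lemma isCone_coneHull (s : Set V) : IsCone (coneHull s) := by
  refine ⟨?_, ?_, ?_⟩
  · exact fun σ hσ => hσ.1.1
  · intro x hx y hy σ hσ
    exact hσ.1.2.1 x (hx σ hσ) y (hy σ hσ)
  · intro c hc x hx σ hσ
    exact hσ.1.2.2 c hc x (hx σ hσ)

lemma subset_coneHull (s : Set V) : s ⊆ coneHull s :=
  fun x hx σ hσ => hσ.2 hx

lemma coneHull_subset {s σ : Set V} (h1 : IsCone σ) (h2 : s ⊆ σ) : coneHull s ⊆ σ :=
  fun x hx => hx σ ⟨h1, h2⟩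

lemma isCone_singleton_zero : IsCone ({0} : Set V) := by
  refine ⟨rfl, ?_, ?_⟩
  · rintro x rfl y rfl; simp
  · rintro c _ x rfl; simp

lemma coneHull_singleton (v : V) :
    coneHull {v} = {x | ∃ c : ℝ, 0 ≤ c ∧ x = c • v} := by
  have hcone : IsCone {x : V | ∃ c : ℝ, 0 ≤ c ∧ x = c • v} := by
    refine ⟨⟨0, le_refl 0, (zero_smul ℝ v).symm⟩, ?_, ?_⟩
    · rintro x ⟨c, hc, rfl⟩ y ⟨d, hd, rfl⟩
      exact ⟨c + d, by linarith, by rw [add_smul]⟩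
    · rintro c hc x ⟨d, hd, rfl⟩
      exact ⟨c * d, mul_nonneg hc hd, by rw [mul_smul]⟩
  apply subset_antisymm
  · exact coneHull_subset hcone (fun x hx => ⟨1, zero_le_one, by rw [one_smul]; exact hx⟩)
  · rintro x ⟨c, hc, rfl⟩
    exact (isCone_coneHull _).2.2 c hc v (subset_coneHull _ rfl)

lemma isCone_image (F : V →ₗ[ℝ] W) {σ : Set V} (h : IsCone σ) : IsCone (F '' σ) := by
  refine ⟨⟨0, h.1, map_zero F⟩, ?_, ?_⟩
  · rintro x ⟨u, hu, rfl⟩ y ⟨w, hw, rfl⟩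
    exact ⟨u + w, h.2.1 u hu w hw, map_add F u w⟩
  · rintro c hc x ⟨u, hu, rfl⟩
    exact ⟨c • u, h.2.2 c hc u hu, map_smul F c u⟩

lemma isFaceOf_refl {σ : Set V} (h : IsCone σ) : IsFaceOf σ σ :=
  ⟨h, subset_rfl, fun x hx y hy _ => ⟨hx, hy⟩⟩

lemma isFaceOf_trans {τ' τ σ : Set V} (h1 : IsFaceOf τ' τ) (h2 : IsFaceOf τ σ) :
    IsFaceOf τ' σ := by
  refine ⟨h1.1, h1.2.1.trans h2.2.1, ?_⟩
  intro x hx y hy hxy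
  obtain ⟨hx', hy'⟩ := h2.2.2 x hx y hy (h1.2.1 hxy)
  exact h1.2.2 x hx' y hy' hxy

lemma faceOf_zero_eq {τ : Set V} (h : IsFaceOf τ ({0} : Set V)) : τ = {0} :=
  subset_antisymm h.2.1 (singleton_subset_iff.mpr h.1.1)

end Aux

lemma fin1_ext {v w : Fin 1 → ℝ} (h : v 0 = w 0) : v = w :=
  funext fun i => by rw [Subsingleton.elim i 0]; exact h

lemma toR_zero {n : ℕ} : toR (0 : Fin n → ℤ) = 0 := by
  funext i; simp [toR]

lemma linearMap_pi_apply {n m : ℕ}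
    (F : (Fin n → ℤ) →ₗ[ℤ] (Fin m → ℤ)) (v : Fin n → ℤ) :
    F v = ∑ j, v j • F (Pi.single j 1) := by
  conv_lhs => rw [← Finset.univ_sum_single v]
  rw [map_sum]
  refine Finset.sum_congr rfl fun j _ => ?_
  rw [← F.map_smul]
  congr 1
  funext k
  simp [Pi.single_apply]

lemma map_toR {n m : ℕ} (F : (Fin n → ℤ) →ₗ[ℤ] (Fin m → ℤ)) (v : Fin n → ℤ) :
    extR F (toR v) = toR (F v) := by
  funext i
  rw [toR]
  conv_rhs => rw [linearMap_pi_apply F v]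
  simp only [extR, Matrix.mulVecLin_apply, Matrix.mulVec, dotProduct,
    Matrix.of_apply, Finset.sum_apply, Pi.smul_apply, smul_eq_mul, toR]
  push_cast
  exact Finset.sum_congr rfl fun j _ => mul_comm _ _

lemma extR_comp {n m k : ℕ} (F : (Fin n → ℤ) →ₗ[ℤ] (Fin m → ℤ))
    (G : (Fin m → ℤ) →ₗ[ℤ] (Fin k → ℤ)) :
    extR (G.comp F) = (extR G).comp (extR F) := by
  apply Module.Basis.ext (Pi.basisFun ℝ (Fin n))
  intro j
  have hj : (Pi.basisFun ℝ (Fin n)) j = toR (Pi.single j 1) := by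
    funext i; simp [toR, Pi.single_apply, Pi.basisFun_apply]
  rw [hj]
  simp only [LinearMap.comp_apply, map_toR]


lemma quadrant_eq : quadrant = {x : Fin 2 → ℝ | 0 ≤ x 0 ∧ 0 ≤ x 1} := by
  have hcone : IsCone {x : Fin 2 → ℝ | 0 ≤ x 0 ∧ 0 ≤ x 1} := by
    refine ⟨⟨le_refl 0, le_refl 0⟩, ?_, ?_⟩
    · intro x hx y hy
      exact ⟨add_nonneg hx.1 hy.1, add_nonneg hx.2 hy.2⟩
    · intro c hc x hx
      exact ⟨mul_nonneg hc hx.1, mul_nonneg hc hx.2⟩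
  apply subset_antisymm
  · apply coneHull_subset hcone
    rintro z ⟨v, hv, rfl⟩
    rcases hv with rfl | rfl <;> constructor <;> norm_num [toR]
  · rintro x ⟨h0, h1⟩
    have hx : x = x 0 • toR ![1, 0] + x 1 • toR ![0, 1] := by
      funext i; fin_cases i <;> simp [toR]
    rw [hx]
    have hc := isCone_coneHull (toR '' {![(1:ℤ), 0], ![0, 1]})
    exact hc.2.1 _ (hc.2.2 _ h0 _ (subset_coneHull _ ⟨![1, 0], by simp, rfl⟩))
      _ (hc.2.2 _ h1 _ (subset_coneHull _ ⟨![0, 1], by simp, rfl⟩))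

lemma decomp2 (x : Fin 2 → ℤ) : x = x 0 • Pi.single 0 1 + x 1 • Pi.single 1 1 := by
  funext i; fin_cases i <;> simp

lemma extR_apply2 (P : (Fin 2 → ℤ) →ₗ[ℤ] (Fin 1 → ℤ)) (x : Fin 2 → ℝ) (i : Fin 1) :
    extR P x i = (P (Pi.single 0 1) 0 : ℝ) * x 0 + (P (Pi.single 1 1) 0 : ℝ) * x 1 := by
  have hi : i = 0 := Subsingleton.elim _ _
  subst hi
  simp [extR, Matrix.mulVecLin_apply, Matrix.mulVec, dotProduct, Fin.sum_univ_two]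

lemma pq_classify {a b p q : ℤ} (hab : IsCoprime a b) (hpq : IsCoprime p q) (ha : a ≠ 0)
    (h : a * p + b * q = 0) : (p = -b ∧ q = a) ∨ (p = b ∧ q = -a) := by
  have h1 : a ∣ q := hab.dvd_of_dvd_mul_left ⟨-p, by linarith⟩
  have h2 : q ∣ a := hpq.symm.dvd_of_dvd_mul_left ⟨-b, by linarith⟩
  have h3 : q = a ∨ q = -a := by
    have := Int.natAbs_eq_natAbs_iff.mp
      (Nat.dvd_antisymm (Int.natAbs_dvd_natAbs.mpr h2) (Int.natAbs_dvd_natAbs.mpr h1))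
    tauto
  rcases h3 with h3 | h3
  · left
    refine ⟨?_, h3⟩
    have hz : a * (p + b) = 0 := by linear_combination h - b * h3
    rcases mul_eq_zero.mp hz with hz | hz
    · exact absurd hz ha
    · linarith
  · right
    refine ⟨?_, h3⟩
    have hz : a * (p - b) = 0 := by linear_combination h - b * h3
    rcases mul_eq_zero.mp hz with hz | hz
    · exact absurd hz ha
    · linarith

def rayE (e : ℤ) : Set (Fin 1 → ℝ) := {v | 0 ≤ (e : ℝ) * v 0}

lemma isCone_rayE (e : ℤ) : IsCone (rayE e) := by
  refine ⟨by simp [rayE], ?_, ?_⟩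
  · intro x hx y hy
    simp only [rayE, mem_setOf_eq, Pi.add_apply] at *
    nlinarith
  · intro c hc x hx
    simp only [rayE, mem_setOf_eq, Pi.smul_apply, smul_eq_mul] at *
    nlinarith

lemma isRatCone_zero {m : ℕ} : ∃ s : Finset (Fin m → ℤ), ({0} : Set (Fin m → ℝ)) = coneHull (toR '' ↑s) := by
  refine ⟨{0}, ?_⟩
  rw [show toR '' (({0} : Finset (Fin m → ℤ)) : Set (Fin m → ℤ)) = {(0 : Fin m → ℝ)} by
    simp [toR_zero]]
  rw [coneHull_singleton]
  ext x
  simp only [mem_singleton_iff, mem_setOf_eq, smul_zero]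
  exact ⟨fun h => ⟨0, le_refl 0, h⟩, fun ⟨c, _, h⟩ => h⟩

lemma rayE_eq_coneHull (e : ℤ) (he : e = 1 ∨ e = -1) :
    rayE e = coneHull (toR '' ↑({(fun _ => e : Fin 1 → ℤ)} : Finset (Fin 1 → ℤ))) := by
  rw [show toR '' (({(fun _ => e : Fin 1 → ℤ)} : Finset (Fin 1 → ℤ)) : Set (Fin 1 → ℤ))
      = {toR (fun _ => e)} by simp]
  rw [coneHull_singleton]
  ext v
  simp only [rayE, mem_setOf_eq]
  constructor
  · intro hv
    refine ⟨(e : ℝ) * v 0, hv, ?_⟩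
    apply fin1_ext
    simp only [Pi.smul_apply, smul_eq_mul, toR]
    rcases he with rfl | rfl <;> push_cast <;> ring
  · rintro ⟨c, hc, rfl⟩
    simp only [Pi.smul_apply, smul_eq_mul, toR]
    rcases he with rfl | rfl <;> push_cast <;> nlinarith

lemma face_rayE {e : ℤ} (he : e = 1 ∨ e = -1) {τ : Set (Fin 1 → ℝ)}
    (h : IsFaceOf τ (rayE e)) : τ = {0} ∨ τ = rayE e := by
  have he' : (e : ℝ) ≠ 0 := by rcases he with rfl | rfl <;> norm_num
  by_cases h0 : ∀ v ∈ τ, v = 0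
  · left
    exact subset_antisymm (fun v hv => h0 v hv) (singleton_subset_iff.mpr h.1.1)
  · right
    push_neg at h0
    obtain ⟨v, hv, hv0⟩ := h0
    have hv0' : v 0 ≠ 0 := by
      intro hc
      exact hv0 (fin1_ext (by simpa using hc))
    have hpos : 0 < (e : ℝ) * v 0 :=
      lt_of_le_of_ne (h.2.1 hv) (Ne.symm (mul_ne_zero he' hv0'))
    apply subset_antisymm h.2.1
    intro w hw
    have hc : 0 ≤ ((e : ℝ) * w 0) / ((e : ℝ) * v 0) := div_nonneg hw hpos.le
    have hweq : w = (((e : ℝ) * w 0) / ((e : ℝ) * v 0)) • v := by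
      apply fin1_ext
      simp only [Pi.smul_apply, smul_eq_mul]
      field_simp
    rw [hweq]
    exact h.1.2.2 _ hc v hv

lemma zero_face_rayE {e : ℤ} (he : e = 1 ∨ e = -1) : IsFaceOf {0} (rayE e) := by
  have he' : (e : ℝ) ≠ 0 := by rcases he with rfl | rfl <;> norm_num
  refine ⟨isCone_singleton_zero, singleton_subset_iff.mpr (by simp [rayE]), ?_⟩
  intro x hx y hy hxy
  have hsum : x 0 + y 0 = 0 := by
    have : x + y = 0 := hxy
    simpa using congrFun this 0
  have hx' : 0 ≤ (e : ℝ) * x 0 := hx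
  have hy' : 0 ≤ (e : ℝ) * y 0 := hy
  have hx0 : x 0 = 0 := by
    rcases he with rfl | rfl <;> push_cast at hx' hy' <;> nlinarith
  have hy0 : y 0 = 0 := by linarith
  exact ⟨fin1_ext (by simpa using hx0), fin1_ext (by simpa using hy0)⟩

lemma sconv_rayE {e : ℤ} (he : e = 1 ∨ e = -1) :
    ∀ x ∈ rayE e, -x ∈ rayE e → x = 0 := by
  intro x hx hnx
  have he' : (e : ℝ) ≠ 0 := by rcases he with rfl | rfl <;> norm_num
  have hx' : 0 ≤ (e : ℝ) * x 0 := hx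
  have hnx' : 0 ≤ (e : ℝ) * (-x) 0 := hnx
  simp only [Pi.neg_apply, mul_neg] at hnx'
  have : (e : ℝ) * x 0 = 0 := le_antisymm (by linarith) hx'
  have hx0 : x 0 = 0 := by
    rcases mul_eq_zero.mp this with h | h
    · exact absurd h he'
    · exact h
  exact fin1_ext (by simpa using hx0)


-- my lemmas continue
lemma isCone_quadrant : IsCone quadrant := isCone_coneHull _

lemma fan_rayE (e : ℤ) (he : e = 1 ∨ e = -1) : IsFan {τ | IsFaceOf τ (rayE e)} := by
  have hsub : {τ | IsFaceOf τ (rayE e)} ⊆ {{0}, rayE e} := by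
    intro τ hτ
    rcases face_rayE he hτ with h | h
    · exact Or.inl h
    · exact Or.inr h
  refine ⟨⟨⟨?_, ?_⟩, ?_, ?_⟩, ?_⟩
  · exact Set.Finite.subset (Set.Finite.insert _ (Set.finite_singleton _)) hsub
  · intro σ hσ
    rcases face_rayE he hσ with rfl | rfl
    · exact isRatCone_zero
    · exact ⟨_, rayE_eq_coneHull e he⟩
  · intro σ _ τ hτσ
    exact isFaceOf_trans hτσ ‹IsFaceOf σ (rayE e)›
  · intro σ hσ σ' hσ'
    rcases face_rayE he hσ with rfl | rfl
    · have h0 : ({0} : Set (Fin 1 → ℝ)) ∩ σ' = {0} := by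
        apply subset_antisymm inter_subset_left
        exact singleton_subset_iff.mpr ⟨rfl, hσ'.1.1⟩
      rw [h0]
      exact isFaceOf_refl isCone_singleton_zero
    · rw [inter_eq_self_of_subset_right hσ'.2.1]
      exact hσ'
  · intro σ hσ
    rcases face_rayE he hσ with rfl | rfl
    · intro x hx _
      exact hx
    · exact sconv_rayE he


/-- Let `N = ℤ²`, `σ` the cone spanned by `e₁, e₂`, `Δ`
the fan of faces of `σ` and `L = ℤ·(a,b)` with `a, b` coprime, `a > 0`.
If `b ≤ 0`, the quotient fan of `Δ` by `L` is the fan of faces of `P^ℝ(σ)` in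
`Ñ = ℤ²/L` (where `P : ℤ² → ℤ²/L ≅ ℤ` is the projection, i.e. any surjection
with kernel `L`). If `b > 0`, then `P^ℝ(σ)` is not strictly convex and the
quotient fan of `Δ` by `L` is the zero fan `{{0}}` in the zero lattice
`ℤ²/L̂` with `L̂ = ℤ²` (realized by the projection onto `ℤ⁰`). -/
theorem quotient_fan_of_C2 (a b : ℤ) (hab : IsCoprime a b) (ha : 0 < a) :
    (b ≤ 0 → ∀ P : (Fin 2 → ℤ) →ₗ[ℤ] (Fin 1 → ℤ), Function.Surjective P →
      LinearMap.ker P = lineLat a b →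
      IsQuotientFan fanC2 (lineLat a b) P {τ | IsFaceOf τ (extR P '' quadrant)}) ∧
    (0 < b →
      (∀ P : (Fin 2 → ℤ) →ₗ[ℤ] (Fin 1 → ℤ), Function.Surjective P →
        LinearMap.ker P = lineLat a b →
        ¬ IsStrictlyConvexCone (extR P '' quadrant)) ∧
      IsQuotientFan fanC2 (lineLat a b) (0 : (Fin 2 → ℤ) →ₗ[ℤ] (Fin 0 → ℤ))
        {({0} : Set (Fin 0 → ℝ))}) := by
  have ha' : (0 : ℝ) < (a : ℝ) := by exact_mod_cast ha
  constructor
  · -- Part 1 : b ≤ 0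
    intro hb P hPsurj hPker
    have hb' : (b : ℝ) ≤ 0 := by exact_mod_cast hb
    have hPab : P ![a, b] = 0 := by
      rw [← LinearMap.mem_ker, hPker]
      exact Submodule.mem_span_singleton_self _
    have hsum : a * P (Pi.single 0 1) 0 + b * P (Pi.single 1 1) 0 = 0 := by
      have hd : (![a, b] : Fin 2 → ℤ) = a • Pi.single 0 1 + b • Pi.single 1 1 := by
        funext i; fin_cases i <;> simp
      rw [hd, map_add, P.map_smul, P.map_smul] at hPab
      simpa using congrFun hPab 0
    have hcop : IsCoprime (P (Pi.single 0 1) 0) (P (Pi.single 1 1) 0) := by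
      obtain ⟨u, hu⟩ := hPsurj (Pi.single 0 1)
      refine ⟨u 0, u 1, ?_⟩
      have h2 : P u 0 = u 0 * P (Pi.single 0 1) 0 + u 1 * P (Pi.single 1 1) 0 := by
        conv_lhs => rw [decomp2 u]
        rw [map_add, P.map_smul, P.map_smul]
        simp
      rw [hu] at h2
      simpa using h2.symm
    obtain ⟨e, he, hpe, hqe⟩ : ∃ e : ℤ, (e = 1 ∨ e = -1) ∧
        P (Pi.single 0 1) 0 = -e * b ∧ P (Pi.single 1 1) 0 = e * a := by
      rcases pq_classify hab hcop ha.ne' hsum with ⟨h1, h2⟩ | ⟨h1, h2⟩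
      · exact ⟨1, Or.inl rfl, by linarith, by linarith⟩
      · exact ⟨-1, Or.inr rfl, by linarith, by linarith⟩
    have hC : extR P '' quadrant = rayE e := by
      ext v
      constructor
      · rintro ⟨x, hx, rfl⟩
        rw [quadrant_eq] at hx
        show 0 ≤ (e : ℝ) * extR P x 0
        rw [extR_apply2, hpe, hqe]
        rcases he with rfl | rfl <;> push_cast <;> nlinarith [hx.1, hx.2]
      · intro hv
        have hv' : 0 ≤ (e : ℝ) * v 0 := hv
        refine ⟨![0, (e : ℝ) * v 0 / a], ?_, ?_⟩
        · rw [quadrant_eq]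
          constructor
          · norm_num
          · show (0:ℝ) ≤ ![0, (e : ℝ) * v 0 / a] 1
            simp only [Matrix.cons_val_one, Matrix.head_cons]
            exact div_nonneg hv' ha'.le
        · apply fin1_ext
          rw [extR_apply2, hpe, hqe]
          simp only [Matrix.cons_val_zero, Matrix.cons_val_one, Matrix.head_cons]
          rcases he with rfl | rfl <;> push_cast <;> field_simp <;> simp
    refine ⟨hPsurj, le_of_eq hPker.symm, ?_, ?_, ?_, ?_⟩
    · -- primitive
      intro v k hk hkv
      rw [LinearMap.mem_ker] at hkv ⊢
      rw [P.map_smul] at hkv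
      funext i
      have h1 := congrFun hkv i
      simp only [Pi.smul_apply, smul_eq_mul, Pi.zero_apply] at h1
      rcases mul_eq_zero.mp h1 with h | h
      · exact absurd h hk
      · simpa using h
    · -- fan
      simp only [hC]
      exact fan_rayE e he
    · -- cone map
      intro σ hσ
      exact ⟨extR P '' quadrant, isFaceOf_refl (isCone_image _ isCone_quadrant),
        image_mono hσ.2.1⟩
    · -- universal property
      intro k F Δ' hΔ' hmap hkerF
      obtain ⟨σ', hσ', himg⟩ := hmap quadrant (isFaceOf_refl isCone_quadrant)
      obtain ⟨u, hu⟩ := hPsurj (Pi.single 0 1)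
      set Ft : (Fin 1 → ℤ) →ₗ[ℤ] (Fin k → ℤ) :=
        { toFun := fun v => v 0 • F u,
          map_add' := fun v w => by simp [add_smul],
          map_smul' := fun c v => by simp [mul_smul] } with hFt
      have hfac : F = Ft.comp P := by
        apply LinearMap.ext
        intro x
        have hker2 : x - (P x 0) • u ∈ LinearMap.ker P := by
          rw [LinearMap.mem_ker, map_sub, P.map_smul, hu]
          funext i
          rw [Subsingleton.elim i 0]
          simp
        have hFz : F (x - (P x 0) • u) = 0 := by
          have hm : x - (P x 0) • u ∈ lineLat a b := by rw [← hPker]; exact hker2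
          exact LinearMap.mem_ker.mp (hkerF hm)
        rw [map_sub, F.map_smul, sub_eq_zero] at hFz
        rw [LinearMap.comp_apply, hFz]
        rfl
      refine ⟨Ft, ?_, hfac⟩
      intro τ hτ
      refine ⟨σ', hσ', ?_⟩
      rintro z ⟨w, hw, rfl⟩
      obtain ⟨y, hy, rfl⟩ := hτ.2.1 hw
      have h1 : extR Ft (extR P y) = extR F y := by
        rw [hfac, extR_comp, LinearMap.comp_apply]
      rw [h1]
      exact himg ⟨y, hy, rfl⟩
  · -- Part 2 : 0 < b
    intro hb0
    have hb0' : (0 : ℝ) < (b : ℝ) := by exact_mod_cast hb0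
    have hxmem : toR ![a, 0] ∈ quadrant := by
      rw [quadrant_eq]
      constructor
      · show (0:ℝ) ≤ toR ![a, 0] 0
        simp only [toR, Matrix.cons_val_zero]
        exact_mod_cast ha.le
      · show (0:ℝ) ≤ toR ![a, 0] 1
        simp [toR]
    have hymem : toR ![0, b] ∈ quadrant := by
      rw [quadrant_eq]
      constructor
      · show (0:ℝ) ≤ toR ![0, b] 0
        simp [toR]
      · show (0:ℝ) ≤ toR ![0, b] 1
        simp only [toR, Matrix.cons_val_one, Matrix.head_cons]
        exact_mod_cast hb0.le
    have hadd : toR ![a, 0] + toR ![0, b] = toR ![a, b] := by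
      funext i; fin_cases i <;> simp [toR]
    constructor
    · -- not strictly convex
      intro P hPsurj hPker hsc
      have hPab : P ![a, b] = 0 := by
        rw [← LinearMap.mem_ker, hPker]
        exact Submodule.mem_span_singleton_self _
      have hsum : a * P (Pi.single 0 1) 0 + b * P (Pi.single 1 1) 0 = 0 := by
        have hd : (![a, b] : Fin 2 → ℤ) = a • Pi.single 0 1 + b • Pi.single 1 1 := by
          funext i; fin_cases i <;> simp
        rw [hd, map_add, P.map_smul, P.map_smul] at hPab
        simpa using congrFun hPab 0
      have hcop : IsCoprime (P (Pi.single 0 1) 0) (P (Pi.single 1 1) 0) := by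
        obtain ⟨u, hu⟩ := hPsurj (Pi.single 0 1)
        refine ⟨u 0, u 1, ?_⟩
        have h2 : P u 0 = u 0 * P (Pi.single 0 1) 0 + u 1 * P (Pi.single 1 1) 0 := by
          conv_lhs => rw [decomp2 u]
          rw [map_add, P.map_smul, P.map_smul]
          simp
        rw [hu] at h2
        simpa using h2.symm
      have hp0 : P (Pi.single 0 1) 0 ≠ 0 := by
        intro hp
        rw [hp] at hsum
        have hq : P (Pi.single 1 1) 0 = 0 := by
          have h : b * P (Pi.single 1 1) 0 = 0 := by linarith
          rcases mul_eq_zero.mp h with h | h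
          · exact absurd h hb0.ne'
          · exact h
        rw [hp, hq] at hcop
        simp [isCoprime_zero_left] at hcop
      have hx : extR P (toR ![a, 0]) ∈ extR P '' quadrant := ⟨_, hxmem, rfl⟩
      have hy : extR P (toR ![0, b]) ∈ extR P '' quadrant := ⟨_, hymem, rfl⟩
      have hsum0 : extR P (toR ![a, 0]) + extR P (toR ![0, b]) = 0 := by
        rw [← map_add, hadd, map_toR, hPab, toR_zero]
      have hneg : -extR P (toR ![a, 0]) = extR P (toR ![0, b]) :=
        neg_eq_of_add_eq_zero_right hsum0
      have h0 : extR P (toR ![a, 0]) = 0 := hsc _ hx (by rw [hneg]; exact hy)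
      have hx0 : ((P (Pi.single 0 1) 0 : ℤ) : ℝ) * (a : ℝ) = 0 := by
        have h := congrFun h0 0
        rw [extR_apply2] at h
        simpa [toR] using h
      rcases mul_eq_zero.mp hx0 with h | h
      · exact hp0 (by exact_mod_cast h)
      · exact ha'.ne' h
    · -- zero quotient fan
      refine ⟨?_, ?_, ?_, ?_, ?_, ?_⟩
      · intro y
        exact ⟨0, funext fun i => i.elim0⟩
      · intro x _
        simp [LinearMap.mem_ker]
      · intro v k hk _
        simp [LinearMap.mem_ker]
      · refine ⟨⟨⟨Set.finite_singleton _, ?_⟩, ?_, ?_⟩, ?_⟩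
        · intro σ hσ
          rw [mem_singleton_iff] at hσ
          subst hσ
          exact isRatCone_zero
        · intro σ hσ τ hτ
          rw [mem_singleton_iff] at hσ ⊢
          subst hσ
          exact faceOf_zero_eq hτ
        · intro σ hσ σ' hσ'
          rw [mem_singleton_iff] at hσ hσ'
          subst hσ; subst hσ'
          rw [inter_self]
          exact isFaceOf_refl isCone_singleton_zero
        · intro σ hσ
          rw [mem_singleton_iff] at hσ
          subst hσ
          intro x hx _
          exact hx
      · intro σ hσ
        refine ⟨{0}, rfl, ?_⟩
        rintro z ⟨w, hw, rfl⟩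
        have hz : extR (0 : (Fin 2 → ℤ) →ₗ[ℤ] (Fin 0 → ℤ)) w = 0 := funext fun i => i.elim0
        rw [hz]
        rfl
      · intro k F Δ' hΔ' hmap hkerF
        obtain ⟨σ', hσ', himg⟩ := hmap quadrant (isFaceOf_refl isCone_quadrant)
        have hσ'cone : IsCone σ' := by
          have h := hΔ'.1.2.2 σ' hσ' σ' hσ'
          rw [inter_self] at h
          exact h.1
        have hFab : F ![a, b] = 0 :=
          LinearMap.mem_ker.mp (hkerF (Submodule.mem_span_singleton_self _))
        have hsum0 : extR F (toR ![a, 0]) + extR F (toR ![0, b]) = 0 := by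
          rw [← map_add, hadd, map_toR, hFab, toR_zero]
        have hx' : extR F (toR ![a, 0]) ∈ σ' := himg ⟨_, hxmem, rfl⟩
        have hy' : extR F (toR ![0, b]) ∈ σ' := himg ⟨_, hymem, rfl⟩
        have hneg : -extR F (toR ![a, 0]) = extR F (toR ![0, b]) :=
          neg_eq_of_add_eq_zero_right hsum0
        have hx0 : extR F (toR ![a, 0]) = 0 := hΔ'.2 σ' hσ' _ hx' (by rw [hneg]; exact hy')
        have hy0 : extR F (toR ![0, b]) = 0 := by rw [← hneg, hx0, neg_zero]
        have hFa : F ![a, 0] = 0 := by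
          rw [map_toR] at hx0
          funext i
          have h := congrFun hx0 i
          simpa [toR] using h
        have hFb : F ![0, b] = 0 := by
          rw [map_toR] at hy0
          funext i
          have h := congrFun hy0 i
          simpa [toR] using h
        have hFe1 : F (Pi.single 0 1) = 0 := by
          have hsm : (![a, 0] : Fin 2 → ℤ) = a • Pi.single 0 1 := by
            funext i; fin_cases i <;> simp
          rw [hsm, F.map_smul] at hFa
          funext i
          have h := congrFun hFa i
          simp only [Pi.smul_apply, smul_eq_mul, Pi.zero_apply] at h ⊢
          rcases mul_eq_zero.mp h with h | h
          · exact absurd h ha.ne'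
          · exact h
        have hFe2 : F (Pi.single 1 1) = 0 := by
          have hsm : (![0, b] : Fin 2 → ℤ) = b • Pi.single 1 1 := by
            funext i; fin_cases i <;> simp
          rw [hsm, F.map_smul] at hFb
          funext i
          have h := congrFun hFb i
          simp only [Pi.smul_apply, smul_eq_mul, Pi.zero_apply] at h ⊢
          rcases mul_eq_zero.mp h with h | h
          · exact absurd h hb0.ne'
          · exact h
        have hF0 : F = 0 := by
          apply LinearMap.ext
          intro x
          conv_lhs => rw [decomp2 x]
          rw [map_add, F.map_smul, F.map_smul, hFe1, hFe2]
          simp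
        refine ⟨0, ?_, by rw [hF0]; ext x; simp⟩
        intro τ hτ
        rw [mem_singleton_iff] at hτ
        subst hτ
        refine ⟨σ', hσ', ?_⟩
        rintro z ⟨w, hw, rfl⟩
        have hz : extR (0 : (Fin 0 → ℤ) →ₗ[ℤ] (Fin k → ℤ)) w = 0 := by
          funext i
          simp [extR, Matrix.mulVecLin_apply, Matrix.mulVec, dotProduct]
        rw [hz]
        exact hσ'cone.1
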